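/- Let d = dim_TE(H,ℓ,ε) be the ε-transfer eluder dimension and suppose that along a trajectory (A_0, ..., A_{T-1}) each action A_t with width w_{V_t}(A_t) > ε is ε-transfer dependent on fewer than ⌊3β_T/ε²⌋ + 1 disjoint subsequences of its predecessors. Then the number of time steps t < T with w_{V_t}(A_t) > ε is at most (3β_T/ε² + 1)·d. -/

import Mathlib

/-- `x` is `ε`-transfer dependent on the subsequence of the trajectory `a`
indexed by the finite set `s`. -/
def DepOn {A H : Type*} (r : H → A → ℝ) (D : A → H → H → ℝ)
    (ε : ℝ) (x : A) (s : Finset ℕ) (a : ℕ → A) : Prop :=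
  ∀ η η' : H, (∑ i ∈ s, D (a i) η' η) ≤ ε ^ 2 → |r η x - r η' x| ≤ ε

/-- The `ε`-transfer eluder dimension. -/
noncomputable def dimTE {A H : Type*} (r : H → A → ℝ) (D : A → H → H → ℝ)
    (ε : ℝ) : ℕ∞ :=
  sSup {n : ℕ∞ | ∃ (m : ℕ) (a : ℕ → A) (ε' : ℝ), ε ≤ ε' ∧ n = (m : ℕ∞) ∧
    ∀ i < m, ¬ DepOn r D ε' (a i) (Finset.range i) a}

/-! Colour the steps `t` with `ε < w t` greedily, in increasing order, with `⌊3β/ε²⌋ + 1`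
colours, giving `t` a colour whose earlier class it is not `ε`-dependent on. Such a colour
exists, for otherwise the colour classes would be `⌊3β/ε²⌋ + 1` disjoint subsequences on which
`A_t` depends. Each colour class, enumerated increasingly, is then an `ε`-independent sequence,
so it has at most `d` elements. -/

open Finset Function

theorem exists_coloring_not_dep_earlier {ι : Type*} [Nonempty ι] [DecidableEq ι]
    (P : ℕ → Finset ℕ → Prop) (S : Finset ℕ)
    (hS : ∀ t ∈ S, ∀ B : ι → Finset ℕ, (∀ k, B k ⊆ range t) → Pairwise (Disjoint on B) →
      ∃ k, ¬ P t (B k)) :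
    ∃ c : ℕ → ι, ∀ t ∈ S, ¬ P t {s ∈ S | c s = c t ∧ s < t} := by
  induction S using Finset.induction_on_max with
  | empty => exact ⟨fun _ => Classical.arbitrary ι, by simp⟩
  | insert a s has ih =>
    obtain ⟨c, hc⟩ := ih fun t ht => hS t (mem_insert_of_mem ht)
    obtain ⟨k, hk⟩ := hS a (mem_insert_self a s) (fun k => {x ∈ s | c x = k})
      (fun k x hx => mem_range.2 (has x (mem_filter.1 hx).1))
      (fun k k' hkk' => disjoint_filter.2 fun x _ hx hx' => hkk' (hx ▸ hx'))
    have ha : a ∉ s := fun h => lt_irrefl a (has a h)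
    refine ⟨update c a k, fun t ht => ?_⟩
    rcases mem_insert.1 ht with rfl | ht
    · convert hk using 2
      ext x
      by_cases hx : x = t <;> simp_all
    · have hta : t < a := has t ht
      convert hc t ht using 2
      ext x
      by_cases hx : x = a
      · simp [hx, ha, hta.not_gt]
      · simp [update_apply, hx, hta.ne]

section

variable {A H : Type*} (r : H → A → ℝ) (D : A → H → H → ℝ) (ε : ℝ)

theorem depOn_image_iff {x : A} {a : ℕ → A} {g : ℕ → ℕ} {s : Finset ℕ}
    (hg : Set.InjOn g s) : DepOn r D ε x (s.image g) a ↔ DepOn r D ε x s (a ∘ g) := by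
  simp only [DepOn, sum_image hg, comp_apply]

theorem filter_lt_nth_eq_image_range (F : Finset ℕ) {i : ℕ} (hi : i < #F) :
    {x ∈ F | x < Nat.nth (· ∈ F) i} = (range i).image (Nat.nth (· ∈ F)) := by
  have hF : (Set.ofPred (· ∈ F)).Finite := F.finite_toSet
  have hcard : #hF.toFinset = #F := by simp
  ext x
  simp only [mem_filter, mem_image, mem_range]
  constructor
  · rintro ⟨hx, hxi⟩
    obtain ⟨j, hj, rfl⟩ := Nat.exists_lt_card_finite_nth_eq hF hx
    exact ⟨j, Nat.lt_of_nth_lt_nth_of_lt_card hF hxi hj, rfl⟩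
  · rintro ⟨j, hj, rfl⟩
    exact ⟨Nat.nth_mem_of_lt_card hF (by omega),
      Nat.nth_lt_nth_of_lt_card hF hj (by omega)⟩

theorem card_le_dimTE {a : ℕ → A} {F : Finset ℕ}
    (hF : ∀ t ∈ F, ¬ DepOn r D ε (a t) {s ∈ F | s < t} a) :
    (#F : ℕ∞) ≤ dimTE r D ε := by
  have hfin : (Set.ofPred (· ∈ F)).Finite := F.finite_toSet
  have hcard : #hfin.toFinset = #F := by simp
  refine le_sSup ⟨#F, a ∘ Nat.nth (· ∈ F), ε, le_rfl, rfl, fun i hi hdep => ?_⟩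
  have hmem : Nat.nth (· ∈ F) i ∈ F := Nat.nth_mem_of_lt_card hfin (by omega)
  refine hF _ hmem ?_
  rwa [filter_lt_nth_eq_image_range F hi, depOn_image_iff]
  exact (Nat.nth_injOn hfin).mono fun j hj => by simp at hj ⊢; omega

theorem card_le_mul_of_forall_exists_not_depOn {ι : Type*} [Fintype ι] [Nonempty ι]
    [DecidableEq ι] {d : ℕ} (hd : dimTE r D ε = d) (a : ℕ → A) (S : Finset ℕ)
    (hS : ∀ t ∈ S, ∀ B : ι → Finset ℕ, (∀ k, B k ⊆ range t) → Pairwise (Disjoint on B) →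
      ∃ k, ¬ DepOn r D ε (a t) (B k) a) :
    #S ≤ Fintype.card ι * d := by
  obtain ⟨c, hc⟩ := exists_coloring_not_dep_earlier (fun t s => DepOn r D ε (a t) s a) S hS
  have hfiber (k : ι) : #{s ∈ S | c s = k} ≤ d := by
    suffices (#{s ∈ S | c s = k} : ℕ∞) ≤ d by exact_mod_cast this
    refine hd ▸ card_le_dimTE r D ε (a := a) fun t ht => ?_
    rw [mem_filter] at ht
    convert hc t ht.1 using 2
    ext x
    simp only [mem_filter, ht.2, and_assoc]
  calc #S = ∑ k, #{s ∈ S | c s = k} := card_eq_sum_card_fiberwise fun x _ => mem_univ (c x)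
    _ ≤ ∑ _k : ι, d := sum_le_sum fun k _ => hfiber k
    _ = Fintype.card ι * d := by simp

end

theorem stmt14_general {A H : Type*} (r : H → A → ℝ) (D : A → H → H → ℝ)
    (ε β : ℝ) (hβ : 0 < β)
    (d : ℕ) (hd : dimTE r D ε = (d : ℕ∞))
    (Aact : ℕ → A) (w : ℕ → ℝ) (T : ℕ)
    (hdep : ∀ t < T, ε < w t →
      ¬ ∃ B : Fin (⌊3 * β / ε ^ 2⌋₊ + 1) → Finset ℕ,
        (∀ k, B k ⊆ Finset.range t) ∧
        (∀ k k', k ≠ k' → Disjoint (B k) (B k')) ∧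
        (∀ k, DepOn r D ε (Aact t) (B k) Aact)) :
    (((Finset.range T).filter fun t => ε < w t).card : ℝ) ≤
      (3 * β / ε ^ 2 + 1) * d := by
  set K := ⌊3 * β / ε ^ 2⌋₊
  have hcard : #{t ∈ range T | ε < w t} ≤ (K + 1) * d := by
    simpa using card_le_mul_of_forall_exists_not_depOn (ι := Fin (K + 1)) r D ε hd Aact _
      fun t ht B hB hdisj => by
        rw [mem_filter, mem_range] at ht
        by_contra! hdepB
        exact hdep t ht.1 ht.2 ⟨B, hB, hdisj, hdepB⟩
  have hK : (K : ℝ) ≤ 3 * β / ε ^ 2 := Nat.floor_le (by positivity)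
  calc (#{t ∈ range T | ε < w t} : ℝ) ≤ ((K + 1) * d : ℕ) := by exact_mod_cast hcard
    _ ≤ (3 * β / ε ^ 2 + 1) * d := by push_cast; gcongr

/-- If `d = dim_TE(H,ℓ,ε)` and along the trajectory every action `A_t` with
width `w_{V_t}(A_t) > ε` is `ε`-transfer dependent on fewer than
`⌊3β_T/ε²⌋ + 1` pairwise disjoint subsequences of its predecessors, then the
number of steps `t < T` with `w_{V_t}(A_t) > ε` is at most `(3β_T/ε² + 1)·d`. -/
theorem stmt14 {A H : Type*} (r : H → A → ℝ) (D : A → H → H → ℝ)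
    (ε β : ℝ) (hε : 0 < ε) (hβ : 0 < β)
    (d : ℕ) (hd : dimTE r D ε = (d : ℕ∞))
    (Aact : ℕ → A) (w : ℕ → ℝ) (T : ℕ)
    (hdep : ∀ t < T, ε < w t →
      ¬ ∃ B : Fin (⌊3 * β / ε ^ 2⌋₊ + 1) → Finset ℕ,
        (∀ k, B k ⊆ Finset.range t) ∧
        (∀ k k', k ≠ k' → Disjoint (B k) (B k')) ∧
        (∀ k, DepOn r D ε (Aact t) (B k) Aact)) :
    (((Finset.range T).filter fun t => ε < w t).card : ℝ) ≤
      (3 * β / ε ^ 2 + 1) * d :=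
  stmt14_general r D ε β hβ d hd Aact w T hdep
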